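/- If $X$ is a Banach function space on $\mathbb{R}^n$ on which the Hardy–Littlewood maximal operator $M$ is weakly bounded (i.e., $\|\chi_{\{Mf>\lambda\}}\|_X \le C\lambda^{-1}\|f\|_X$ for all $f\in X$ and $\lambda>0$), then for all balls $B\subset\mathbb{R}^n$ and all measurable sets $E\subset B$, one has $\frac{|E|}{|B|} \le C\,\frac{\|\chi_E\|_X}{\|\chi_B\|_X}$. -/

import Mathlib

open MeasureTheory Metric Set ENNReal NNReal Filter

noncomputable section

abbrev Rn (n : ℕ) := EuclideanSpace ℝ (Fin n)

/-- The (extended) Hardy--Littlewood maximal operator for `ℝ≥0∞`-valued functions. -/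
def HLmaxE {n : ℕ} (f : Rn n → ℝ≥0∞) (x : Rn n) : ℝ≥0∞ :=
  ⨆ (c : Rn n) (r : ℝ) (_ : 0 < r) (_ : x ∈ ball c r),
    (∫⁻ y in ball c r, f y) / volume (ball c r)

/-- The Hardy--Littlewood maximal operator `M`. -/
def HLmax {n : ℕ} (f : Rn n → ℝ) (x : Rn n) : ℝ≥0∞ :=
  HLmaxE (fun y => (‖f y‖₊ : ℝ≥0∞)) x

/-- A Banach function space over `ℝⁿ`, described by its norm functional. -/
structure BanachFunctionSpace (n : ℕ) where
  N : (Rn n → ℝ) → ℝ≥0∞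
  N_zero : ∀ f : Rn n → ℝ, N f = 0 ↔ f =ᵐ[volume] 0
  N_smul : ∀ (c : ℝ) (f : Rn n → ℝ), N (c • f) = (‖c‖₊ : ℝ≥0∞) * N f
  N_add : ∀ f g : Rn n → ℝ, N (f + g) ≤ N f + N g
  N_abs : ∀ f : Rn n → ℝ, N (fun x => |f x|) = N f
  N_mono : ∀ f g : Rn n → ℝ, (∀ᵐ x ∂volume, |g x| ≤ |f x|) → N g ≤ N f
  N_fatou : ∀ (f : ℕ → Rn n → ℝ) (F : Rn n → ℝ),
      (∀ j, ∀ᵐ x ∂volume, 0 ≤ f j x ∧ f j x ≤ f (j + 1) x) →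
      (∀ᵐ x ∂volume, Tendsto (fun j => f j x) atTop (nhds (F x))) →
      Tendsto (fun j => N (f j)) atTop (nhds (N F))
  N_ind_lt_top : ∀ F : Set (Rn n), MeasurableSet F → volume F < ∞ →
      N (F.indicator (fun _ => (1 : ℝ))) < ∞
  N_loc_int : ∀ F : Set (Rn n), MeasurableSet F → volume F < ∞ →
      ∃ C : ℝ≥0, ∀ h : Rn n → ℝ, (∫⁻ x in F, (‖h x‖₊ : ℝ≥0∞)) ≤ (C : ℝ≥0∞) * N h

/- Averaging `χ_E` over the ball `B ⊇ E` itself shows `M χ_E ≥ |E| / |B|` on all of `B`. Hence for every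
`t < |E| / |B|` the level set `{M χ_E > t}` contains `B`, and the weak-type bound gives
`‖χ_B‖_X ≤ (C / t) ‖χ_E‖_X`; letting `t ↑ |E| / |B|` yields the estimate with the weak-type constant. -/

theorem setLIntegral_nnnorm_indicator_one {α : Type*} [MeasurableSpace α] {μ : Measure α}
    {E B : Set α} (hE : MeasurableSet E) (hEB : E ⊆ B) :
    ∫⁻ y in B, (‖E.indicator (fun _ => (1 : ℝ)) y‖₊ : ℝ≥0∞) ∂μ = μ E := by
  have hnorm : (fun y => (‖E.indicator (fun _ => (1 : ℝ)) y‖₊ : ℝ≥0∞))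
      = E.indicator (fun _ => 1) := by
    funext y
    by_cases hy : y ∈ E <;> simp [hy]
  rw [hnorm, lintegral_indicator hE, setLIntegral_one, Measure.restrict_apply hE,
    inter_eq_self_of_subset_left hEB]

theorem ball_average_le_HLmax {n : ℕ} (f : Rn n → ℝ) {c x : Rn n} {r : ℝ} (hr : 0 < r)
    (hx : x ∈ ball c r) :
    (∫⁻ y in ball c r, (‖f y‖₊ : ℝ≥0∞)) / volume (ball c r) ≤ HLmax f x :=
  le_iSup_of_le c <| le_iSup_of_le r <| le_iSup_of_le hr <| le_iSup_of_le hx le_rfl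

theorem measure_div_le_HLmax_indicator {n : ℕ} {E : Set (Rn n)} {c x : Rn n} {r : ℝ}
    (hE : MeasurableSet E) (hEB : E ⊆ ball c r) (hr : 0 < r) (hx : x ∈ ball c r) :
    volume E / volume (ball c r) ≤ HLmax (E.indicator (fun _ => (1 : ℝ))) x := by
  simpa only [setLIntegral_nnnorm_indicator_one hE hEB] using
    ball_average_le_HLmax (E.indicator (fun _ => (1 : ℝ))) hr hx

namespace BanachFunctionSpace

variable {n : ℕ} (X : BanachFunctionSpace n)

theorem N_indicator_one_mono {s t : Set (Rn n)} (hst : s ⊆ t) :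
    X.N (s.indicator (fun _ => (1 : ℝ))) ≤ X.N (t.indicator (fun _ => (1 : ℝ))) := by
  refine X.N_mono _ _ (Eventually.of_forall fun x => ?_)
  rw [abs_of_nonneg (indicator_nonneg (fun _ _ => zero_le_one) x),
    abs_of_nonneg (indicator_nonneg (fun _ _ => zero_le_one) x)]
  exact indicator_le_indicator_of_subset hst (fun _ => zero_le_one) x

theorem N_indicator_one_ne_zero {s : Set (Rn n)} (hs : volume s ≠ 0) :
    X.N (s.indicator (fun _ => (1 : ℝ))) ≠ 0 := by
  rw [Ne, X.N_zero]
  refine fun h => hs (measure_mono_null (fun x hx => ?_) h)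
  simp [hx]

theorem measure_ratio_le_of_weak_bound {C : ℝ}
    (hweak : ∀ (f : Rn n → ℝ) (lam : ℝ), 0 < lam →
      X.N ({x | ENNReal.ofReal lam < HLmax f x}.indicator (fun _ => (1 : ℝ)))
        ≤ ENNReal.ofReal (C / lam) * X.N f)
    {c : Rn n} {r : ℝ} (hr : 0 < r) {E : Set (Rn n)} (hE : MeasurableSet E)
    (hEB : E ⊆ ball c r) :
    volume E / volume (ball c r)
      ≤ ENNReal.ofReal C * X.N (E.indicator (fun _ => (1 : ℝ)))
          / X.N ((ball c r).indicator (fun _ => (1 : ℝ))) := by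
  have hB_ne_zero := X.N_indicator_one_ne_zero (measure_ball_pos volume c hr).ne'
  have hB_ne_top := (X.N_ind_lt_top (ball c r) measurableSet_ball measure_ball_lt_top).ne
  refine ENNReal.le_of_forall_pos_nnreal_lt fun t ht htρ => ?_
  rw [ENNReal.le_div_iff_mul_le (Or.inl hB_ne_zero) (Or.inl hB_ne_top)]
  have hlevel : ball c r ⊆ {x | ENNReal.ofReal t < HLmax (E.indicator (fun _ => (1 : ℝ))) x} :=
    fun x hx => by
      rw [mem_ofPred_eq, ENNReal.ofReal_coe_nnreal]
      exact htρ.trans_le (measure_div_le_HLmax_indicator hE hEB hr hx)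
  calc (t : ℝ≥0∞) * X.N ((ball c r).indicator (fun _ => (1 : ℝ)))
      ≤ t * (ENNReal.ofReal (C / t) * X.N (E.indicator (fun _ => (1 : ℝ)))) :=
        mul_le_mul_right ((X.N_indicator_one_mono hlevel).trans (hweak _ _ ht)) _
    _ = ENNReal.ofReal C * X.N (E.indicator (fun _ => (1 : ℝ))) := by
        rw [← mul_assoc, ← ENNReal.ofReal_coe_nnreal, ← ENNReal.ofReal_mul t.coe_nonneg,
          mul_div_cancel₀ _ (NNReal.coe_pos.mpr ht).ne']

end BanachFunctionSpace

theorem weak_bounded_maximal_implies_measure_ratio_estimate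
    {n : ℕ} (X : BanachFunctionSpace n)
    (hweak : ∃ C : ℝ, 0 < C ∧ ∀ (f : Rn n → ℝ) (lam : ℝ), 0 < lam →
      X.N ({x | ENNReal.ofReal lam < HLmax f x}.indicator (fun _ => (1 : ℝ)))
        ≤ ENNReal.ofReal (C / lam) * X.N f) :
    ∃ C : ℝ, 0 < C ∧ ∀ (c : Rn n) (r : ℝ), 0 < r →
      ∀ E : Set (Rn n), MeasurableSet E → E ⊆ ball c r →
      volume E / volume (ball c r)
        ≤ ENNReal.ofReal C *
          (X.N (E.indicator (fun _ => (1 : ℝ))) /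
            X.N ((ball c r).indicator (fun _ => (1 : ℝ)))) := by
  obtain ⟨C, hC, hw⟩ := hweak
  refine ⟨C, hC, fun c r hr E hE hEB => ?_⟩
  rw [← mul_div_assoc]
  exact X.measure_ratio_le_of_weak_bound hw hr hE hEB

end
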